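/- arXiv:1804.04129 — 5 statements merged into one kernel-verified Lean document; each statement's English description precedes it below -/
import Mathlib

section
/- For positive integers s, D with s ≥ 3D−1 and a positive even integer n, the rational function R_n satisfies the symmetry R_n(−n − t) = (−1)^s · R_n(t) for every real t at which both sides are defined (i.e., where the denominators do not vanish). -/
/-- The rational function `R_n(t)` from [FSZ18]:
`R_n(t) = D^(3Dn) * n!^(s+1-3D) * (∏_{l=0}^{3Dn} (t - n + l/D)) / (∏_{l=0}^{n} (t + l)^(s+1))`. -/
noncomputable def Rfun (s D n : ℕ) (t : ℝ) : ℝ :=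
  (D : ℝ) ^ (3 * D * n) * (n.factorial : ℝ) ^ (s + 1 - 3 * D) *
      (∏ l ∈ Finset.range (3 * D * n + 1), (t - n + l / D)) /
    ∏ l ∈ Finset.range (n + 1), (t + l) ^ (s + 1)

set_option maxRecDepth 8000

/-- For `s ≥ 3D - 1` and `n` positive and even, the rational function `R_n` satisfies the
symmetry `R_n(-n - t) = (-1)^s R_n(t)` wherever both denominators are nonzero. -/
theorem Rfun_symm (s D : ℕ) (hs : 0 < s) (hD : 0 < D) (hsD : 3 * D - 1 ≤ s)
    (n : ℕ) (hn : 0 < n) (hne : Even n) (t : ℝ)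
    (h1 : ∏ l ∈ Finset.range (n + 1), (t + l) ≠ 0)
    (h2 : ∏ l ∈ Finset.range (n + 1), (-(n : ℝ) - t + l) ≠ 0) :
    Rfun s D n (-(n : ℝ) - t) = (-1) ^ s * Rfun s D n t := by
  have hDr : (D : ℝ) ≠ 0 := Nat.cast_ne_zero.mpr hD.ne'
  set N := 3 * D * n with hN
  -- numerator reflection
  have e1 : ∏ l ∈ Finset.range (N + 1), ((-(n : ℝ) - t) - n + l / D)
      = ∏ l ∈ Finset.range (N + 1), -(t - n + l / D) := by
    rw [← Finset.prod_range_reflect (fun j => -(t - (n : ℝ) + j / D)) (N + 1)]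
    apply Finset.prod_congr rfl
    intro j hj
    simp only [Finset.mem_range] at hj
    have hj' : j ≤ N := Nat.lt_succ_iff.mp hj
    have hc : ((N + 1 - 1 - j : ℕ) : ℝ) = N - j := by
      have : N + 1 - 1 - j = N - j := by omega
      rw [this, Nat.cast_sub hj']
    rw [hc]
    have hNcast : (N : ℝ) = 3 * D * n := by push_cast [hN]; ring
    field_simp
    rw [hNcast]
    ring
  have e2 : ∏ l ∈ Finset.range (N + 1), -(t - (n : ℝ) + l / D)
      = (-1) ^ (N + 1) * ∏ l ∈ Finset.range (N + 1), (t - n + l / D) := by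
    rw [Finset.prod_congr rfl (fun l (_ : l ∈ Finset.range (N+1)) =>
        (neg_one_mul (t - (n : ℝ) + l / D)).symm),
      Finset.prod_mul_distrib, Finset.prod_const, Finset.card_range]
  -- denominator reflection
  have e3 : ∏ l ∈ Finset.range (n + 1), ((-(n : ℝ) - t) + l) ^ (s + 1)
      = ((-1 : ℝ) ^ (s + 1)) ^ (n + 1) * ∏ l ∈ Finset.range (n + 1), (t + l) ^ (s + 1) := by
    have e3' : ∏ l ∈ Finset.range (n + 1), ((-(n : ℝ) - t) + l) ^ (s + 1)
        = ∏ l ∈ Finset.range (n + 1), (-(t + l)) ^ (s + 1) := by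
      rw [← Finset.prod_range_reflect (fun j => (-(t + (j : ℝ))) ^ (s + 1)) (n + 1)]
      apply Finset.prod_congr rfl
      intro j hj
      simp only [Finset.mem_range] at hj
      have hj' : j ≤ n := Nat.lt_succ_iff.mp hj
      have hc : ((n + 1 - 1 - j : ℕ) : ℝ) = n - j := by
        have : n + 1 - 1 - j = n - j := by omega
        rw [this, Nat.cast_sub hj']
      rw [hc]
      ring
    rw [e3']
    rw [Finset.prod_congr rfl (fun l (_ : l ∈ Finset.range (n+1)) => by rw [neg_pow]),
      Finset.prod_mul_distrib, Finset.prod_const, Finset.card_range]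
  -- sign computations
  have hNeven : Even N := hne.mul_left _
  have hsign1 : ((-1 : ℝ)) ^ (N + 1) = -1 := (Even.add_one hNeven).neg_one_pow
  have hsign2 : (((-1 : ℝ)) ^ (s + 1)) ^ (n + 1) = (-1) ^ (s + 1) := by
    rw [← pow_mul, Nat.mul_comm, pow_mul, (Even.add_one hne).neg_one_pow]
  have hQ : ∏ l ∈ Finset.range (n + 1), (t + (l : ℝ)) ^ (s + 1) ≠ 0 := by
    rw [Finset.prod_pow]
    exact pow_ne_zero _ h1
  unfold Rfun
  rw [e1, e2, e3, hsign1, hsign2, pow_succ]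
  rcases Nat.even_or_odd s with h | h
  · rw [h.neg_one_pow]
    field_simp
    rfl
  · rw [h.neg_one_pow]
    field_simp
    rfl
end

section
/- For positive integers s, D with s ≥ 3D−1, a positive integer n, and any j ∈ {1,…,D}, the quantity r_{n,j} is strictly positive: r_{n,j} > 0. (Indeed R_n(m + j/D) = 0 for 1 ≤ m ≤ n−1 and R_n(m + j/D) > 0 for every integer m ≥ n.) -/
/-- The linear forms `r_{n,j} = ∑_{m=1}^∞ R_n(m + j/D)`. -/
noncomputable def rApprox (s D n j : ℕ) : ℝ :=
  ∑' m : ℕ, Rfun s D n ((m : ℝ) + 1 + j / D)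

/-!
For `t > n` every factor of `R_n(t)` is positive. At the points `t = k / D` with `k ∈ ℕ` the
numerator vanishes as soon as `t < n`, because then `t - n + l / D = 0` for `l = Dn - k ≤ 3Dn`.
The terms of `r_{n,j}` are taken at such points, `t = (D(m+1) + j) / D`, so they are all
nonnegative and the one at `m = n` is positive. Since `s + 1 ≥ 3D`, the denominator has degree at
least `3Dn + 3` while the numerator has degree `3Dn + 1`, so `R_n(t) = O(t⁻²)` and the series
converges.
-/

section

variable {s D n : ℕ}

lemma Rfun_pos (hD : 0 < D) {t : ℝ} (ht : (n : ℝ) < t) : 0 < Rfun s D n t := by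
  unfold Rfun
  have hl : ∀ l : ℕ, (0 : ℝ) ≤ l / D := fun l => by positivity
  refine div_pos (mul_pos (by positivity) (Finset.prod_pos fun l _ => ?_))
    (Finset.prod_pos fun l _ => pow_pos ?_ _)
  · linarith [hl l]
  · linarith [(Nat.cast_nonneg n : (0 : ℝ) ≤ n), (Nat.cast_nonneg l : (0 : ℝ) ≤ l)]

lemma Rfun_natCast_div_nonneg (hD : 0 < D) (k : ℕ) : 0 ≤ Rfun s D n (k / D) := by
  have hD' : (0 : ℝ) < D := by exact_mod_cast hD
  have hfactor : ∀ l : ℕ, (k : ℝ) / D - n + l / D = ((k + l : ℝ) - D * n) / D := fun l => by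
    field_simp
    ring
  have hnum : 0 ≤ ∏ l ∈ Finset.range (3 * D * n + 1), ((k : ℝ) / D - n + l / D) := by
    rcases le_or_gt (D * n) k with hk | hk
    · refine Finset.prod_nonneg fun l _ => ?_
      rw [hfactor]
      have : (D * n : ℝ) ≤ k := by exact_mod_cast hk
      exact div_nonneg (by linarith [(Nat.cast_nonneg l : (0 : ℝ) ≤ l)]) hD'.le
    · have hmem : D * n - k ∈ Finset.range (3 * D * n + 1) :=
        Finset.mem_range.mpr (by have := Nat.sub_le (D * n) k; nlinarith)
      rw [Finset.prod_eq_zero hmem (by rw [hfactor, Nat.cast_sub hk.le]; push_cast; ring)]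
  unfold Rfun
  positivity

lemma Rfun_le_div_sq (hD : 0 < D) (hsD : 3 * D ≤ s + 1) {t : ℝ} (ht1 : 1 ≤ t)
    (htn : (n : ℝ) ≤ t) :
    Rfun s D n t ≤ (D : ℝ) ^ (3 * D * n) * (n.factorial : ℝ) ^ (s + 1 - 3 * D) *
      (3 * n + 1) ^ (3 * D * n + 1) / t ^ 2 := by
  have hD1 : (1 : ℝ) ≤ D := by exact_mod_cast hD
  have ht0 : 0 < t := by linarith
  have hfactor : ∀ l ∈ Finset.range (3 * D * n + 1), t - n + l / D ≤ (3 * n + 1) * t := by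
    intro l hl
    have hl' : (l : ℝ) ≤ 3 * D * n := by
      exact_mod_cast Nat.lt_succ_iff.mp (Finset.mem_range.mp hl)
    have hlD : (l : ℝ) / D ≤ 3 * n := by
      rw [div_le_iff₀ (by linarith)]
      linarith
    nlinarith [(Nat.cast_nonneg n : (0 : ℝ) ≤ n)]
  have hnum : ∏ l ∈ Finset.range (3 * D * n + 1), (t - n + l / D) ≤
      ((3 * n + 1) * t) ^ (3 * D * n + 1) :=
    calc _ ≤ ∏ _l ∈ Finset.range (3 * D * n + 1), (3 * n + 1) * t :=
          Finset.prod_le_prod (fun l _ => by linarith [(by positivity : (0 : ℝ) ≤ l / D)])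
            hfactor
      _ = _ := by rw [Finset.prod_const, Finset.card_range]
  have hden : t ^ (3 * D * n + 1 + 2) ≤ ∏ l ∈ Finset.range (n + 1), (t + l) ^ (s + 1) :=
    calc t ^ (3 * D * n + 1 + 2) ≤ t ^ ((s + 1) * (n + 1)) :=
          pow_le_pow_right₀ ht1 (by nlinarith)
      _ = ∏ _l ∈ Finset.range (n + 1), t ^ (s + 1) := by
        rw [Finset.prod_const, Finset.card_range, pow_mul]
      _ ≤ ∏ l ∈ Finset.range (n + 1), (t + l) ^ (s + 1) :=
        Finset.prod_le_prod (fun _ _ => by positivity) fun l _ => by gcongr; simp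
  calc Rfun s D n t ≤ (D : ℝ) ^ (3 * D * n) * (n.factorial : ℝ) ^ (s + 1 - 3 * D) *
        ((3 * n + 1) * t) ^ (3 * D * n + 1) / t ^ (3 * D * n + 1 + 2) := by
        unfold Rfun
        gcongr
    _ = _ := by
      rw [mul_pow, pow_add t (3 * D * n + 1) 2]
      field_simp

lemma summable_Rfun_add (hD : 0 < D) (hsD : 3 * D ≤ s + 1) {a : ℝ} (ha : 0 ≤ a) :
    Summable fun m : ℕ => Rfun s D n (m + 1 + a) := by
  set C : ℝ := (D : ℝ) ^ (3 * D * n) * (n.factorial : ℝ) ^ (s + 1 - 3 * D) *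
    (3 * n + 1) ^ (3 * D * n + 1)
  refine .of_norm_bounded_eventually_nat
    ((Real.summable_one_div_nat_pow.mpr one_lt_two).mul_left C) ?_
  filter_upwards [Filter.eventually_ge_atTop (n + 1)] with m hm
  have hm' : (n : ℝ) + 1 ≤ m := by exact_mod_cast hm
  have ht : (m : ℝ) ≤ m + 1 + a := by linarith
  rw [Real.norm_of_nonneg (Rfun_pos hD (by linarith)).le, mul_one_div]
  calc Rfun s D n (m + 1 + a) ≤ C / (m + 1 + a) ^ 2 :=
        Rfun_le_div_sq hD hsD (by linarith [(Nat.cast_nonneg n : (0 : ℝ) ≤ n)]) (by linarith)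
    _ ≤ C / (m : ℝ) ^ 2 := by
      have : (0 : ℝ) < m := by linarith [(Nat.cast_nonneg n : (0 : ℝ) ≤ n)]
      gcongr

end

theorem rApprox_pos_general (s D : ℕ) (hD : 0 < D) (hsD : 3 * D - 1 ≤ s)
    (n : ℕ) (j : ℕ) :
    0 < rApprox s D n j := by
  have hpoint : ∀ m : ℕ, (m : ℝ) + 1 + j / D = ((D * (m + 1) + j : ℕ) : ℝ) / D := by
    intro m
    have : (D : ℝ) ≠ 0 := by positivity
    field_simp
    push_cast
    ring
  refine (summable_Rfun_add hD (by omega) (by positivity)).tsum_pos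
    (fun m => hpoint m ▸ Rfun_natCast_div_nonneg hD _) n (Rfun_pos hD ?_)
  have : (0 : ℝ) ≤ j / D := by positivity
  linarith

/-- The quantity `r_{n,j}` is strictly positive. -/
theorem rApprox_pos (s D : ℕ) (hs : 0 < s) (hD : 0 < D) (hsD : 3 * D - 1 ≤ s)
    (n : ℕ) (hn : 0 < n) (j : ℕ) (hj : j ∈ Finset.Icc 1 D) :
    0 < rApprox s D n j :=
  rApprox_pos_general s D hD hsD n j
end

section
/- Root-of-unity filter for the binomial series: let D be a positive integer, ξ = e^{2πi/D}, a a positive integer, and r an integer with 0 ≤ r ≤ D−1. Then for every complex x with |x| < 1, Σ_{l ≥ 0, l ≡ r (mod D)} ((a)_l / l!) · x^l = (1/D) · Σ_{m=1}^{D} ξ^{−mr} / (1 − ξ^m x)^{a}, where (a)_l = a(a+1)⋯(a+l−1) is the Pochhammer symbol. -/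
open Finset

/-- Binomial series: `∑ (a)_l / l! * y^l = 1/(1-y)^a` for `‖y‖ < 1`. -/
lemma binom_hasSum_aux (a : ℕ) (ha : 0 < a) {y : ℂ} (hy : ‖y‖ < 1) :
    HasSum (fun l : ℕ => (ascPochhammer ℂ l).eval (a : ℂ) / (l.factorial : ℂ) * y ^ l)
      (1 / (1 - y) ^ a) := by
  have h := hasSum_choose_mul_geometric_of_norm_lt_one (𝕜 := ℂ) (a - 1) hy
  rw [Nat.sub_add_cancel ha] at h
  convert h using 2 with l
  · rfl
  have h1 : (ascPochhammer ℂ l).eval (a : ℂ) = (((ascPochhammer ℕ l).eval a : ℕ) : ℂ) := by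
    rw [ascPochhammer_eval_cast]
  have h2 : a + l - 1 = (a - 1) + l := by omega
  have h3 : l + (a - 1) = (a - 1) + l := by omega
  rw [h1, ascPochhammer_nat_eq_ascFactorial, Nat.ascFactorial_eq_factorial_mul_choose', h2,
    h3, ← Nat.choose_symm_add]
  have hf : (l.factorial : ℂ) ≠ 0 := Nat.cast_ne_zero.mpr l.factorial_ne_zero
  push_cast
  field_simp

/-- Root-of-unity filter sum. -/
lemma filter_sum_aux (D : ℕ) (hD : 0 < D) {ξ : ℂ} (hξ : IsPrimitiveRoot ξ D) (k : ℤ) :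
    ∑ m ∈ Finset.Icc 1 D, (ξ ^ (k : ℤ)) ^ m = if (D : ℤ) ∣ k then (D : ℂ) else 0 := by
  set w : ℂ := ξ ^ (k : ℤ) with hw
  have hwD : w ^ D = 1 := by
    rw [hw, ← zpow_natCast (ξ ^ k) D, ← zpow_mul, mul_comm, zpow_mul, zpow_natCast,
      hξ.pow_eq_one, one_zpow]
  by_cases hdvd : (D : ℤ) ∣ k
  · have hw1 : w = 1 := (hξ.zpow_eq_one_iff_dvd k).mpr hdvd
    simp [hw1, hdvd, Nat.card_Icc]
  · have hw1 : w ≠ 1 := fun h => hdvd ((hξ.zpow_eq_one_iff_dvd k).mp h)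
    rw [if_neg hdvd]
    have : Finset.Icc 1 D = Finset.Ico 1 (D + 1) := by
      rw [Finset.Ico_add_one_right_eq_Icc]
    rw [this, Finset.sum_Ico_eq_sum_range]
    simp only [Nat.add_sub_cancel]
    have : ∀ i : ℕ, w ^ (1 + i) = w * w ^ i := fun i => by rw [pow_add, pow_one]
    rw [Finset.sum_congr rfl fun i _ => this i, ← Finset.mul_sum, geom_sum_eq hw1, hwD]
    simp

/-- **Root-of-unity filter for the binomial series**: for a positive integer `D`,
`ξ = e^(2πi/D)`, a positive integer `a`, and `0 ≤ r ≤ D - 1`, for `|x| < 1` one has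
`∑_{l ≥ 0, l ≡ r (mod D)} ((a)_l / l!) x^l = (1/D) ∑_{m=1}^{D} ξ^(-mr) / (1 - ξ^m x)^a`. -/
theorem root_of_unity_filter_binomial (D : ℕ) (hD : 0 < D) (a : ℕ) (ha : 0 < a)
    (r : ℕ) (hr : r ≤ D - 1) (x : ℂ) (hx : ‖x‖ < 1) :
    (∑' l : ℕ, if l % D = r then
        (ascPochhammer ℂ l).eval (a : ℂ) / (l.factorial : ℂ) * x ^ l else 0) =
      (1 / D) * ∑ m ∈ Finset.Icc 1 D,
        Complex.exp (2 * Real.pi * Complex.I / D) ^ (-(m * r : ℤ)) /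
          (1 - Complex.exp (2 * Real.pi * Complex.I / D) ^ m * x) ^ a := by
  set ξ : ℂ := Complex.exp (2 * Real.pi * Complex.I / D) with hξdef
  have hξ : IsPrimitiveRoot ξ D := hξdef ▸ Complex.isPrimitiveRoot_exp D hD.ne'
  have hξ0 : ξ ≠ 0 := Complex.exp_ne_zero _
  have hξ1 : ‖ξ‖ = 1 := hξ.norm'_eq_one hD.ne'
  have hD0 : (D : ℂ) ≠ 0 := Nat.cast_ne_zero.mpr hD.ne'
  -- coefficient function
  set c : ℕ → ℂ := fun l => (ascPochhammer ℂ l).eval (a : ℂ) / (l.factorial : ℂ) with hc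
  -- binomial series for each m
  have hnorm : ∀ m : ℕ, ‖ξ ^ m * x‖ < 1 := by
    intro m
    rw [norm_mul, norm_pow]
    have : ‖ξ‖ = 1 := hξ1
    rw [this, one_pow, one_mul]
    exact hx
  have hbs : ∀ m : ℕ, HasSum (fun l : ℕ => ξ ^ (-(m * r : ℤ)) * (c l * (ξ ^ m * x) ^ l))
      (ξ ^ (-(m * r : ℤ)) / (1 - ξ ^ m * x) ^ a) := by
    intro m
    have := (binom_hasSum_aux a ha (hnorm m)).mul_left (ξ ^ (-(m * r : ℤ)))
    rwa [mul_one_div] at this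
  -- rewrite RHS as sum of tsums
  have hRHS : ∑ m ∈ Finset.Icc 1 D,
      ξ ^ (-(m * r : ℤ)) / (1 - ξ ^ m * x) ^ a =
      ∑ m ∈ Finset.Icc 1 D, ∑' l : ℕ, ξ ^ (-(m * r : ℤ)) * (c l * (ξ ^ m * x) ^ l) :=
    Finset.sum_congr rfl fun m _ => ((hbs m).tsum_eq).symm
  rw [hRHS, ← Summable.tsum_finsetSum (fun m _ => (hbs m).summable), ← tsum_mul_left]
  refine tsum_congr fun l => ?_
  -- per-term identity
  have hterm : ∀ m : ℕ, ξ ^ (-(m * r : ℤ)) * (c l * (ξ ^ m * x) ^ l)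
      = (ξ ^ ((l : ℤ) - (r : ℤ))) ^ m * (c l * x ^ l) := by
    intro m
    rw [mul_pow, ← pow_mul]
    have hz : ξ ^ (-(m * r : ℤ)) * ξ ^ (m * l) = (ξ ^ ((l : ℤ) - (r : ℤ))) ^ m := by
      rw [← zpow_natCast ξ (m * l), ← zpow_add₀ hξ0,
        ← zpow_natCast (ξ ^ ((l : ℤ) - (r : ℤ))) m, ← zpow_mul]
      congr 1
      push_cast
      ring
    rw [← hz]
    ring
  rw [Finset.sum_congr rfl fun m _ => hterm m, ← Finset.sum_mul,
    filter_sum_aux D hD hξ ((l : ℤ) - (r : ℤ))]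
  have hrD : r < D := by omega
  have key : ((D : ℤ) ∣ (l : ℤ) - (r : ℤ)) ↔ l % D = r := by
    rw [← Int.modEq_iff_dvd]
    unfold Int.ModEq
    rw [Int.emod_eq_of_lt (by positivity) (by exact_mod_cast hrD), ← Int.natCast_mod]
    omega
  by_cases hmod : l % D = r
  · rw [if_pos hmod, if_pos (key.mpr hmod), ← mul_assoc, one_div, inv_mul_cancel₀ hD0, one_mul]
  · rw [if_neg hmod, if_neg (fun h => hmod (key.mp h))]
    simp
end

section
/- For positive integers s, D with s ≥ 3D−1, a positive integer n, and any j ∈ {1,…,D}, the approximation r_{n,j} admits the real multiple-integral representation r_{n,j} = ( (3Dn+j)! / (D · n!^{3D} · (j−1)!) ) · ∫_{[0,1]^{s+1}} f_j(t_0 t_1 ⋯ t_s) · ∏_{i=0}^{s} t_i^{n+j/D−1}(1−t_i)^n dt_0 ⋯ dt_s, where f_j(t) = Σ_{k=0}^{∞} ((3Dn+j+1)_{Dk} / (j)_{Dk}) t^k. -/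
open MeasureTheory

/-- The power series `f_j(t) = ∑_{k=0}^∞ ((3Dn+j+1)_{Dk} / (j)_{Dk}) t^k` (real version). -/
noncomputable def fSeriesReal (n D j : ℕ) (t : ℝ) : ℝ :=
  ∑' k : ℕ,
    (ascPochhammer ℝ (D * k)).eval ((3 * D * n + j + 1 : ℕ) : ℝ) /
      (ascPochhammer ℝ (D * k)).eval (j : ℝ) * t ^ k

/-!
`R_n` vanishes at `i + j/D` for `i < n`, so after the shift `m + 1 = n + k` the series `r_{n,j}`
runs over `k ≥ 0`, and its `k`-th term factors as the `k`-th coefficient of `f_j` times the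
`(s+1)`-st power of the Beta integral
`∫₀¹ t^(n+j/D+k-1) (1-t)^n dt = n! / ∏_{l=0}^{n} (n+j/D+k+l)`.
Such a power is an integral over the cube `[0,1]^(s+1)`, and summing under the integral is
legitimate because the terms are `O(k^(3Dn+1-(n+1)(s+1))) = O(k^(-2))`.
-/

open Set
open scoped Nat

theorem integral_Icc_rpow_mul_one_sub_pow {x : ℝ} (hx : 0 < x) (n : ℕ) :
    ∫ t in Icc (0 : ℝ) 1, t ^ (x - 1) * (1 - t) ^ n =
      n ! / ∏ l ∈ Finset.range (n + 1), (x + l) := by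
  have hB := Complex.betaIntegral_eval_nat_add_one_right (u := x) (by simpa using hx) n
  have hcongr :
      EqOn (fun t : ℝ ↦ (t : ℂ) ^ ((x : ℂ) - 1) * (1 - (t : ℂ)) ^ ((n : ℂ) + 1 - 1))
        (fun t ↦ ((t ^ (x - 1) * (1 - t) ^ n : ℝ) : ℂ)) (uIcc 0 1) := by
    intro t ht
    rw [uIcc_of_le zero_le_one] at ht
    simp only [add_sub_cancel_right, Complex.cpow_natCast, Complex.ofReal_mul,
      Complex.ofReal_pow, Complex.ofReal_sub, Complex.ofReal_one, Complex.ofReal_cpow ht.1]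
  rw [Complex.betaIntegral, intervalIntegral.integral_congr hcongr,
    intervalIntegral.integral_ofReal] at hB
  rw [integral_Icc_eq_integral_Ioc, ← intervalIntegral.integral_of_le zero_le_one]
  exact_mod_cast hB

theorem volume_restrict_Icc_pi {ι : Type*} [Fintype ι] (a b : ι → ℝ) :
    (volume : Measure (ι → ℝ)).restrict (Icc a b) =
      Measure.pi fun i ↦ volume.restrict (Icc (a i) (b i)) := by
  rw [← pi_univ_Icc, volume_pi, Measure.restrict_pi_pi]

theorem integrableOn_Icc_rpow_mul_one_sub_pow {x : ℝ} (hx : 1 ≤ x) (n : ℕ) :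
    IntegrableOn (fun t : ℝ ↦ t ^ (x - 1) * (1 - t) ^ n) (Icc 0 1) :=
  ((Real.continuous_rpow_const (by linarith)).mul (by fun_prop)).continuousOn.integrableOn_Icc

theorem integral_Icc_pi_tsum_mul_prod {ι : Type*} [Fintype ι] (c : ℕ → ℝ) {x : ℝ}
    (hx : 1 ≤ x) (n : ℕ) (hc : Summable fun k ↦
      |c k| * (n ! / ∏ l ∈ Finset.range (n + 1), (x + k + l)) ^ Fintype.card ι) :
    ∫ t in Icc (0 : ι → ℝ) 1,
        (∑' k, c k * (∏ i, t i) ^ k) * ∏ i, t i ^ (x - 1) * (1 - t i) ^ n =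
      ∑' k, c k * (n ! / ∏ l ∈ Finset.range (n + 1), (x + k + l)) ^ Fintype.card ι := by
  set g : ℕ → ℝ → ℝ := fun k t ↦ t ^ (x + k - 1) * (1 - t) ^ n
  have hexpand : EqOn
      (fun t : ι → ℝ ↦ (∑' k, c k * (∏ i, t i) ^ k) * ∏ i, t i ^ (x - 1) * (1 - t i) ^ n)
      (fun t ↦ ∑' k, c k * ∏ i, g k (t i)) (Icc 0 1) := by
    intro t ht
    simp only [← tsum_mul_right, mul_assoc, ← Finset.prod_pow, ← Finset.prod_mul_distrib]
    refine tsum_congr fun k ↦ congrArg _ (Finset.prod_congr rfl fun i _ ↦ ?_)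
    have hti : 0 ≤ t i := ht.1 i
    rw [show g k (t i) = t i ^ (x - 1 + k) * (1 - t i) ^ n by
        simp only [g, add_sub_right_comm],
      Real.rpow_add_of_nonneg hti (by linarith) k.cast_nonneg, Real.rpow_natCast]
    ring
  have hg : ∀ k, IntegrableOn (g k) (Icc 0 1) := fun k ↦
    integrableOn_Icc_rpow_mul_one_sub_pow (by linarith [k.cast_nonneg (α := ℝ)]) n
  have hbox : ∀ (k : ℕ) (F : ℝ → ℝ), EqOn F (g k) (Icc 0 1) →
      ∫ t in Icc (0 : ι → ℝ) 1, ∏ i, F (t i) =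
        (n ! / ∏ l ∈ Finset.range (n + 1), (x + k + l)) ^ Fintype.card ι := by
    intro k F hF
    rw [volume_restrict_Icc_pi]
    simp only [Pi.zero_apply, Pi.one_apply]
    rw [integral_fintype_prod_eq_pow, setIntegral_congr_fun measurableSet_Icc hF,
      integral_Icc_rpow_mul_one_sub_pow (by positivity)]
  rw [setIntegral_congr_fun measurableSet_Icc hexpand, ← integral_tsum_of_summable_integral_norm]
  · refine tsum_congr fun k ↦ ?_
    rw [integral_const_mul, hbox k (g k) fun _ _ ↦ rfl]
  · intro k
    refine Integrable.const_mul ?_ _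
    rw [volume_restrict_Icc_pi]
    exact Integrable.fintype_prod fun _ ↦ hg k
  · refine hc.congr fun k ↦ ?_
    simp only [norm_mul, norm_prod, Real.norm_eq_abs]
    rw [integral_const_mul, hbox k _ fun t ht ↦ abs_of_nonneg ?_]
    exact mul_nonneg (Real.rpow_nonneg ht.1 _) (pow_nonneg (sub_nonneg.2 ht.2) n)

theorem pow_le_prod_range_add {x : ℝ} (hx : 1 ≤ x) (k m : ℕ) :
    ((k : ℝ) + 1) ^ m ≤ ∏ l ∈ Finset.range m, (x + k + l) := by
  calc ((k : ℝ) + 1) ^ m = ∏ _l ∈ Finset.range m, ((k : ℝ) + 1) := by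
        rw [Finset.prod_const, Finset.card_range]
    _ ≤ _ := Finset.prod_le_prod (fun _ _ ↦ by positivity) fun l _ ↦ by
        linarith [l.cast_nonneg (α := ℝ)]

theorem summable_mul_div_prod_pow {a : ℕ → ℝ} {A C x : ℝ} {M n p : ℕ}
    (ha : ∀ k, |a k| ≤ A * ((k : ℝ) + 1) ^ M) (hC : 0 ≤ C) (hx : 1 ≤ x)
    (hM : M + 2 ≤ (n + 1) * p) :
    Summable fun k ↦ |a k| * (C / ∏ l ∈ Finset.range (n + 1), (x + k + l)) ^ p := by
  have hinv : Summable fun k : ℕ ↦ 1 / ((k : ℝ) + 1) ^ 2 := by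
    simpa using (summable_nat_add_iff 1).2 (Real.summable_one_div_nat_pow.2 one_lt_two)
  refine .of_nonneg_of_le (fun k ↦ by positivity) (fun k ↦ ?_) (hinv.mul_left (A * C ^ p))
  have hA : 0 ≤ A := by simpa using (abs_nonneg _).trans (ha 0)
  have hu : (1 : ℝ) ≤ k + 1 := by linarith [k.cast_nonneg (α := ℝ)]
  obtain ⟨r, hr⟩ : ∃ r, (n + 1) * p = M + 2 + r := ⟨(n + 1) * p - (M + 2), by omega⟩
  calc |a k| * (C / ∏ l ∈ Finset.range (n + 1), (x + k + l)) ^ p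
      ≤ A * ((k : ℝ) + 1) ^ M * (C / ((k : ℝ) + 1) ^ (n + 1)) ^ p := by
        gcongr
        · exact ha k
        · exact pow_le_prod_range_add hx k (n + 1)
    _ = A * C ^ p / (((k : ℝ) + 1) ^ 2 * ((k : ℝ) + 1) ^ r) := by
        rw [div_pow, ← pow_mul, hr]
        field_simp
        ring
    _ ≤ A * C ^ p * (1 / ((k : ℝ) + 1) ^ 2) := by
        rw [mul_one_div]
        exact div_le_div_of_nonneg_left (by positivity) (by positivity)
          (le_mul_of_one_le_right (by positivity) (one_le_pow₀ hu))

theorem tsum_nat_add_eq_tsum_of_eq_zero {α : Type*} [AddCommMonoid α] [TopologicalSpace α]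
    {f : ℕ → α} {N : ℕ} (hf : ∀ m < N, f m = 0) : ∑' k, f (k + N) = ∑' m, f m := by
  refine (add_left_injective N).tsum_eq fun m hm ↦ ⟨m - N, Nat.sub_add_cancel ?_⟩
  by_contra h
  exact hm (hf m (by omega))

theorem ascPochhammer_eval_div_eval_eq {A j : ℕ} (hj : 1 ≤ j) (m : ℕ) :
    (ascPochhammer ℝ m).eval ((A + j + 1 : ℕ) : ℝ) / (ascPochhammer ℝ m).eval (j : ℝ) =
      (m + j).ascFactorial (A + 1) * (j - 1)! / (A + j)! := by
  have hj' : 0 < j.ascFactorial m := by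
    simpa [Nat.sub_add_cancel hj] using Nat.ascFactorial_pos (j - 1) m
  rw [← Nat.cast_ascFactorial, ← Nat.cast_ascFactorial,
    div_eq_div_iff (by positivity) (by positivity)]
  norm_cast
  calc (A + j + 1).ascFactorial m * (A + j)! = (A + j + m)! := by
        rw [mul_comm, Nat.factorial_mul_ascFactorial]
    _ = (m + j).ascFactorial (A + 1) * (m + j - 1)! := by
        rw [mul_comm, Nat.factorial_mul_ascFactorial' _ _ (by omega)]
        congr 1
        omega
    _ = (m + j).ascFactorial (A + 1) * (j - 1)! * j.ascFactorial m := by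
        rw [mul_assoc, Nat.factorial_mul_ascFactorial' _ _ (by omega), add_comm m]

noncomputable def fSeriesCoeff (n D j k : ℕ) : ℝ :=
  (ascPochhammer ℝ (D * k)).eval ((3 * D * n + j + 1 : ℕ) : ℝ) /
    (ascPochhammer ℝ (D * k)).eval (j : ℝ)

theorem fSeriesReal_eq_tsum (n D j : ℕ) (t : ℝ) :
    fSeriesReal n D j t = ∑' k, fSeriesCoeff n D j k * t ^ k :=
  rfl

theorem abs_fSeriesCoeff_le {n D j : ℕ} (hj : 1 ≤ j) (k : ℕ) :
    |fSeriesCoeff n D j k| ≤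
      ((D + j + 3 * D * n : ℕ) : ℝ) ^ (3 * D * n + 1) * ((k : ℝ) + 1) ^ (3 * D * n + 1) := by
  rw [fSeriesCoeff, ascPochhammer_eval_div_eval_eq hj, abs_of_nonneg (by positivity),
    div_le_iff₀ (by positivity), ← mul_pow]
  have hasc : (D * k + j).ascFactorial (3 * D * n + 1) ≤
      ((D + j + 3 * D * n) * (k + 1)) ^ (3 * D * n + 1) := by
    have h := Nat.ascFactorial_le_pow_add (D * k + j - 1) (3 * D * n + 1)
    rw [Nat.sub_add_cancel (by omega),
      show D * k + j - 1 + (3 * D * n + 1) = D * k + j + 3 * D * n by omega] at h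
    exact h.trans (Nat.pow_le_pow_left (by ring_nf; omega) _)
  gcongr
  · exact_mod_cast hasc
  · omega

theorem Rfun_natCast_add_div_eq_zero (s : ℕ) {D n j i : ℕ} (hD : 0 < D) (hjD : j ≤ D)
    (hi : i < n) : Rfun s D n (i + j / D) = 0 := by
  have hjl : j ≤ D * (n - i) := hjD.trans (Nat.le_mul_of_pos_right D (by omega))
  have hmem : D * (n - i) - j ∈ Finset.range (3 * D * n + 1) := by
    rw [Finset.mem_range]
    have : D * (n - i) ≤ D * n := Nat.mul_le_mul_left D (by omega)
    exact Nat.lt_succ_of_le ((Nat.sub_le _ _).trans (this.trans (by nlinarith)))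
  refine div_eq_zero_iff.2 (.inl (mul_eq_zero_of_right _ (Finset.prod_eq_zero hmem ?_)))
  rw [Nat.cast_sub hjl, Nat.cast_mul, Nat.cast_sub hi.le]
  have hD' : (D : ℝ) ≠ 0 := by positivity
  field_simp
  ring

theorem rApprox_eq_tsum_Rfun (s : ℕ) {D n j : ℕ} (hD : 0 < D) (hjD : j ≤ D) (hn : 0 < n) :
    rApprox s D n j = ∑' k : ℕ, Rfun s D n (n + k + j / D) := by
  rw [rApprox, ← tsum_nat_add_eq_tsum_of_eq_zero (N := n - 1) fun m hm ↦ by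
    exact_mod_cast Rfun_natCast_add_div_eq_zero s hD hjD (i := m + 1) (by omega)]
  refine tsum_congr fun k ↦ congrArg _ ?_
  push_cast [Nat.cast_sub hn]
  ring

theorem Rfun_natCast_add_eq {s D n j : ℕ} (hD : 0 < D) (hj : 1 ≤ j) (hsD : 3 * D ≤ s + 1)
    (k : ℕ) :
    Rfun s D n (n + k + j / D) =
      (3 * D * n + j)! / (D * (n ! : ℝ) ^ (3 * D) * (j - 1)!) *
        (fSeriesCoeff n D j k *
          (n ! / ∏ l ∈ Finset.range (n + 1), ((n : ℝ) + j / D + k + l)) ^ (s + 1)) := by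
  have hD' : (D : ℝ) ≠ 0 := by positivity
  have hnum : ∏ l ∈ Finset.range (3 * D * n + 1), ((n : ℝ) + k + j / D - n + l / D) =
      (D * k + j).ascFactorial (3 * D * n + 1) / (D : ℝ) ^ (3 * D * n + 1) := by
    have hfactor : ∀ l ∈ Finset.range (3 * D * n + 1),
        (n : ℝ) + k + j / D - n + l / D = ((D * k + j + l : ℕ) : ℝ) / D := fun l _ ↦ by
      push_cast
      field_simp
      ring
    rw [Finset.prod_congr rfl hfactor, Finset.prod_div_distrib, Finset.prod_const,
      Finset.card_range, Nat.ascFactorial_eq_prod_range, Nat.cast_prod]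
  have hden : ∏ l ∈ Finset.range (n + 1), ((n : ℝ) + k + j / D + l) ^ (s + 1) =
      (∏ l ∈ Finset.range (n + 1), ((n : ℝ) + j / D + k + l)) ^ (s + 1) := by
    rw [Finset.prod_pow]
    ring_nf
  have hP : 0 < (∏ l ∈ Finset.range (n + 1), ((n : ℝ) + j / D + k + l)) ^ (s + 1) := by
    positivity
  obtain ⟨e, he⟩ : ∃ e, s + 1 = 3 * D + e := ⟨s + 1 - 3 * D, by omega⟩
  rw [Rfun, hnum, hden, fSeriesCoeff, ascPochhammer_eval_div_eval_eq hj, div_pow]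
  generalize (∏ l ∈ Finset.range (n + 1), ((n : ℝ) + j / D + k + l)) ^ (s + 1) = P at hP ⊢
  rw [he, Nat.add_sub_cancel_left, pow_add]
  field_simp
  ring

theorem rApprox_eq_fSeries_integral_general (s D : ℕ) (hD : 0 < D) (hsD : 3 * D - 1 ≤ s)
    (n : ℕ) (hn : 0 < n) (j : ℕ) (hj : j ∈ Finset.Icc 1 D) :
    rApprox s D n j =
      ((3 * D * n + j).factorial : ℝ) /
          (D * (n.factorial : ℝ) ^ (3 * D) * ((j - 1).factorial : ℝ)) *
        ∫ t in Set.Icc (0 : Fin (s + 1) → ℝ) 1,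
          fSeriesReal n D j (∏ i, t i) *
            ∏ i, t i ^ ((n : ℝ) + j / D - 1) * (1 - t i) ^ n := by
  obtain ⟨hj1, hjD⟩ := Finset.mem_Icc.1 hj
  have hsD' : 3 * D ≤ s + 1 := by omega
  have hx : 1 ≤ (n : ℝ) + j / D := by
    have : (1 : ℝ) ≤ n := by exact_mod_cast hn
    linarith [show (0 : ℝ) ≤ j / D by positivity]
  have hsum := summable_mul_div_prod_pow (abs_fSeriesCoeff_le (n := n) (D := D) hj1)
    (C := n !) (n := n) (p := s + 1) (by positivity) hx (by nlinarith)
  simp only [fSeriesReal_eq_tsum]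
  rw [rApprox_eq_tsum_Rfun s hD hjD hn,
    integral_Icc_pi_tsum_mul_prod _ hx n (by rwa [Fintype.card_fin]), Fintype.card_fin,
    ← tsum_mul_left]
  exact tsum_congr (Rfun_natCast_add_eq hD hj1 hsD')

/-- The hypergeometric multiple-integral representation
`r_{n,j} = ((3Dn+j)! / (D n!^(3D) (j-1)!)) ∫_{[0,1]^(s+1)} f_j(t_0 ⋯ t_s)
∏_{i=0}^{s} t_i^(n+j/D-1) (1-t_i)^n dt_0 ⋯ dt_s`. -/
theorem rApprox_eq_fSeries_integral (s D : ℕ) (hs : 0 < s) (hD : 0 < D) (hsD : 3 * D - 1 ≤ s)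
    (n : ℕ) (hn : 0 < n) (j : ℕ) (hj : j ∈ Finset.Icc 1 D) :
    rApprox s D n j =
      ((3 * D * n + j).factorial : ℝ) /
          (D * (n.factorial : ℝ) ^ (3 * D) * ((j - 1).factorial : ℝ)) *
        ∫ t in Set.Icc (0 : Fin (s + 1) → ℝ) 1,
          fSeriesReal n D j (∏ i, t i) *
            ∏ i, t i ^ ((n : ℝ) + j / D - 1) * (1 - t i) ^ n :=
  rApprox_eq_fSeries_integral_general s D hD hsD n hn j hj
end

section
/- For positive integers n, D, a nonnegative integer k, j ∈ {1,…,D}, and reals a = n + j/D, the (s+1)-fold integral of the k-th series term evaluates as ∫_{[0,1]^{s+1}} (t_0 ⋯ t_s)^{n+j/D−1+k} ∏_{i=0}^{s}(1−t_i)^n dt_0 ⋯ dt_s = ( n! / ∏_{l=0}^{n} (k + n + l + j/D) )^{s+1}, for any nonnegative integer s. -/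
open MeasureTheory

lemma beta_real (a : ℝ) (ha : 0 < a) (n : ℕ) :
    ∫ x in (0:ℝ)..1, x ^ (a - 1) * (1 - x) ^ n
      = n.factorial / ∏ l ∈ Finset.range (n + 1), (a + l) := by
  have h := Complex.betaIntegral_eval_nat_add_one_right (u := (a : ℂ))
    (by simpa using ha) n
  rw [Complex.betaIntegral] at h
  have key : (∫ (x : ℝ) in (0:ℝ)..1,
      (x:ℂ) ^ ((a:ℂ) - 1) * ((1:ℂ) - (x:ℂ)) ^ (((n:ℂ) + 1) - 1))
      = ((∫ x in (0:ℝ)..1, x ^ (a - 1) * (1 - x) ^ n : ℝ) : ℂ) := by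
    rw [← intervalIntegral.integral_ofReal]
    refine intervalIntegral.integral_congr ?_
    intro x hx
    rw [Set.uIcc_of_le (by norm_num)] at hx
    have hx0 : (0:ℝ) ≤ x := hx.1
    have hx1 : x ≤ 1 := hx.2
    simp only []
    rw [Complex.ofReal_mul, Complex.ofReal_cpow hx0, Complex.ofReal_pow]
    push_cast
    rw [add_sub_cancel_right, Complex.cpow_natCast]
  rw [key] at h
  apply Complex.ofReal_injective
  rw [h]
  push_cast
  ring

/-- Termwise `(s+1)`-fold Beta-type evaluation on the unit cube:
`∫_{[0,1]^(s+1)} (t_0 ⋯ t_s)^(n+j/D-1+k) ∏_{i=0}^{s} (1-t_i)^n dt_0 ⋯ dt_s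
= (n! / ∏_{l=0}^{n} (k + n + l + j/D))^(s+1)`. -/
theorem integral_cube_monomial (n D : ℕ) (hn : 0 < n) (hD : 0 < D) (k : ℕ)
    (j : ℕ) (hj : j ∈ Finset.Icc 1 D) (s : ℕ) :
    ∫ t in Set.Icc (0 : Fin (s + 1) → ℝ) 1,
        (∏ i, t i) ^ ((n : ℝ) + j / D - 1 + k) * ∏ i, (1 - t i) ^ n =
      ((n.factorial : ℝ) /
          ∏ l ∈ Finset.range (n + 1), ((k : ℝ) + n + l + j / D)) ^ (s + 1) := by
  set a : ℝ := (n : ℝ) + j / D - 1 + k with ha_def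
  set g : ℝ → ℝ := fun x => x ^ a * (1 - x) ^ n with hg_def
  have hstep1 : ∫ t in Set.Icc (0 : Fin (s + 1) → ℝ) 1,
      (∏ i, t i) ^ a * ∏ i, (1 - t i) ^ n
      = ∫ t in Set.Icc (0 : Fin (s + 1) → ℝ) 1, ∏ i, g (t i) := by
    refine setIntegral_congr_fun measurableSet_Icc ?_
    intro t ht
    simp only [Set.mem_Icc, Pi.le_def] at ht
    have hnn : ∀ i ∈ Finset.univ, (0:ℝ) ≤ t i := fun i _ => by
      simpa using ht.1 i
    rw [hg_def]
    simp only []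
    rw [Finset.prod_mul_distrib, Real.finset_prod_rpow _ _ hnn]
  rw [hstep1, ← integral_indicator measurableSet_Icc]
  have hstep2 : (Set.Icc (0 : Fin (s + 1) → ℝ) 1).indicator
      (fun t => ∏ i, g (t i))
      = fun t => ∏ i, (Set.Icc (0:ℝ) 1).indicator g (t i) := by
    funext t
    by_cases h : t ∈ Set.Icc (0 : Fin (s + 1) → ℝ) 1
    · rw [Set.indicator_of_mem h]
      simp only [Set.mem_Icc, Pi.le_def] at h
      exact Finset.prod_congr rfl fun i _ =>
        (Set.indicator_of_mem (Set.mem_Icc.2 ⟨h.1 i, h.2 i⟩) g).symm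
    · rw [Set.indicator_of_notMem h]
      simp only [Set.mem_Icc, Pi.le_def, not_and_or, not_forall] at h
      rcases h with ⟨i, hi⟩ | ⟨i, hi⟩
      · exact (Finset.prod_eq_zero (Finset.mem_univ i)
          (Set.indicator_of_notMem (by simp [Set.mem_Icc]; intro h'; exact absurd h' (by simpa using hi)) g)).symm
      · exact (Finset.prod_eq_zero (Finset.mem_univ i)
          (Set.indicator_of_notMem (by simp [Set.mem_Icc]; intro _; simpa using hi) g)).symm
  rw [hstep2, MeasureTheory.integral_fintype_prod_volume_eq_pow,
    integral_indicator measurableSet_Icc]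
  have hcard : Fintype.card (Fin (s + 1)) = s + 1 := Fintype.card_fin _
  rw [hcard]
  congr 1
  have hu : (0:ℝ) < (n : ℝ) + j / D + k := by
    have : (1:ℝ) ≤ (n:ℝ) := by exact_mod_cast hn
    have h2 : (0:ℝ) ≤ j / D := by positivity
    nlinarith [Nat.cast_nonneg (α := ℝ) k]
  have hb := beta_real ((n : ℝ) + j / D + k) hu n
  rw [MeasureTheory.integral_Icc_eq_integral_Ioc,
    ← intervalIntegral.integral_of_le zero_le_one]
  have hgeq : ∀ x ∈ Set.uIcc (0:ℝ) 1, g x = x ^ ((n : ℝ) + j / D + k - 1) * (1 - x) ^ n := by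
    intro x _
    rw [hg_def]; simp only []
    congr 1
    rw [ha_def]
    ring_nf
  rw [intervalIntegral.integral_congr hgeq, hb]
  congr 1
  exact Finset.prod_congr rfl fun l _ => by ring
end
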